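/- For n ≥ 2 and k ≥ 1, the number a_{n,k} of tree-like tableaux of size n with exactly k occupied corners satisfies the recurrence k·a_{n,k} = 2k·a_{n-1,k} + (n - 2(k-1))·a_{n-1,k-1}. -/

import Mathlib

open Polynomial

/-- A tree-like tableau: a Young diagram together with a set of pointed cells,
such that the top-left cell is pointed (the root point), every non-root point
has a point above it in its column or to its left in its row but not both,
and no row or column of the diagram is empty of points. Cells are indexed by
`(row, column)` with the top-left cell `(0,0)`. -/
structure TreeLikeTableau where
  shape : YoungDiagram
  points : Finset (ℕ × ℕ)
  points_subset : points ⊆ shape.cells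
  root_mem : (0, 0) ∈ points
  point_cond : ∀ p ∈ points, p ≠ (0, 0) →
    Xor' (∃ r < p.1, (r, p.2) ∈ points) (∃ c < p.2, (p.1, c) ∈ points)
  no_empty_row : ∀ i j : ℕ, (i, j) ∈ shape.cells → ∃ c, (i, c) ∈ points
  no_empty_col : ∀ i j : ℕ, (i, j) ∈ shape.cells → ∃ r, (r, j) ∈ points

namespace TreeLikeTableau

/-- The size of a tree-like tableau is its number of points. -/
def size (T : TreeLikeTableau) : ℕ := T.points.card

/-- The occupied corners of a tree-like tableau: pointed cells whose bottom
and right edges lie on the Southeast border of the diagram. -/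
def occCorners (T : TreeLikeTableau) : Finset (ℕ × ℕ) :=
  T.points.filter (fun p => (p.1 + 1, p.2) ∉ T.shape.cells ∧ (p.1, p.2 + 1) ∉ T.shape.cells)

/-- The number of occupied corners. -/
def oc (T : TreeLikeTableau) : ℕ := T.occCorners.card

end TreeLikeTableau

/-- `a n k` is the number of tree-like tableaux of size `n` with exactly `k`
occupied corners. -/
noncomputable def a (n k : ℕ) : ℕ :=
  Set.ncard {T : TreeLikeTableau | T.size = n ∧ T.oc = k}

/-!
Double counting. Pairs `(T, c)` of a tableau of size `n` with `k` occupied corners and one of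
its occupied corners number `k·a_{n,k}`. For `n ≥ 2` the corner `c` is not the root, so it has a
point above it or to its left, but not both. If above, `c` is alone in its row, and deleting
that row leaves a tree-like tableau `T'` of size `n - 1` in which `c` came from the lowest cell
of its column; if to the left, the same holds after transposing.

Conversely, below the lowest cell `q` of any column of a tableau `T'` (or, transposing, to the
right of the last cell of any row) one can insert a new row holding a single point under `q`;
this point is an occupied corner of the result. Rows plus columns of `T'` number
`size T' + 1 = n` (every row and every column starts with a point, and only the root starts
both). The insertion kills the occupied corner `q` if there was one, so it keeps the number of
occupied corners at the `2·oc T'` sites that are occupied corners of `T'` and raises it by one at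
the other `n - 2·oc T'` sites. Summing over `T'` gives the recurrence.
-/

open Finset

def shiftBelow (i : ℕ) : ℕ × ℕ ↪o ℕ × ℕ :=
  OrderEmbedding.ofMapLEIff (fun q => (if q.1 ≤ i then q.1 else q.1 + 1, q.2)) fun p q => by
    simp only [Prod.le_def, and_congr_left_iff]
    intro _
    split_ifs <;> omega

lemma shiftBelow_apply (i : ℕ) (q : ℕ × ℕ) :
    shiftBelow i q = (if q.1 ≤ i then q.1 else q.1 + 1, q.2) := rfl

lemma shiftBelow_fst_ne (i : ℕ) (q : ℕ × ℕ) : (shiftBelow i q).1 ≠ i + 1 := by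
  simp only [shiftBelow_apply]
  split_ifs <;> omega

lemma exists_shiftBelow_eq {i : ℕ} {x : ℕ × ℕ} (hx : x.1 ≠ i + 1) : ∃ y, shiftBelow i y = x :=
  ⟨(if x.1 ≤ i then x.1 else x.1 - 1, x.2), by
    ext <;> simp only [shiftBelow_apply]; split_ifs <;> omega⟩

lemma shiftBelow_zero (i : ℕ) : shiftBelow i (0, 0) = (0, 0) := by simp [shiftBelow_apply]

lemma shiftBelow_ne_zero (i : ℕ) {p : ℕ × ℕ} (h0 : p ≠ (0, 0)) : shiftBelow i p ≠ (0, 0) :=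
  fun h => h0 ((shiftBelow i).injective (h.trans (shiftBelow_zero i).symm))

noncomputable def unshiftBelow (i : ℕ) (Q : Finset (ℕ × ℕ)) : Finset (ℕ × ℕ) :=
  Q.preimage (shiftBelow i) (shiftBelow i).injective.injOn

@[simp]
lemma mem_unshiftBelow {i : ℕ} {Q : Finset (ℕ × ℕ)} {x : ℕ × ℕ} :
    x ∈ unshiftBelow i Q ↔ shiftBelow i x ∈ Q :=
  mem_preimage

def insertBelowPoints (P : Finset (ℕ × ℕ)) (q : ℕ × ℕ) : Finset (ℕ × ℕ) :=
  insert (q.1 + 1, q.2) (P.map (shiftBelow q.1).toEmbedding)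

lemma mem_insertBelowPoints {P : Finset (ℕ × ℕ)} {q x : ℕ × ℕ} :
    x ∈ insertBelowPoints P q ↔ x = (q.1 + 1, q.2) ∨ ∃ y ∈ P, shiftBelow q.1 y = x := by
  simp only [insertBelowPoints, mem_insert, mem_map, RelEmbedding.coe_toEmbedding]

lemma mk_mem_insertBelowPoints {P : Finset (ℕ × ℕ)} {q : ℕ × ℕ} {j : ℕ} :
    (q.1 + 1, j) ∈ insertBelowPoints P q ↔ j = q.2 := by
  rw [mem_insertBelowPoints, Prod.mk.injEq]
  simp only [true_and]
  exact or_iff_left fun ⟨y, _, hy⟩ => shiftBelow_fst_ne q.1 y (congrArg Prod.fst hy)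

lemma new_notMem_map_shiftBelow (P : Finset (ℕ × ℕ)) (q : ℕ × ℕ) :
    (q.1 + 1, q.2) ∉ P.map (shiftBelow q.1).toEmbedding := by
  rw [mem_map]
  exact fun ⟨y, _, hy⟩ => shiftBelow_fst_ne q.1 y (congrArg Prod.fst hy)

lemma unshiftBelow_insertBelowPoints (P : Finset (ℕ × ℕ)) (q : ℕ × ℕ) :
    unshiftBelow q.1 (insertBelowPoints P q) = P := by
  ext x
  rw [mem_unshiftBelow, insertBelowPoints, mem_insert, mem_map, RelEmbedding.coe_toEmbedding]
  have hx : shiftBelow q.1 x ≠ (q.1 + 1, q.2) :=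
    fun h => shiftBelow_fst_ne q.1 x (congrArg Prod.fst h)
  simp only [hx, false_or, (shiftBelow q.1).injective.eq_iff, exists_eq_right]

namespace YoungDiagram

variable (μ : YoungDiagram)

def IsCorner (x : ℕ × ℕ) : Prop := (x.1 + 1, x.2) ∉ μ ∧ (x.1, x.2 + 1) ∉ μ

def colBottoms : Finset (ℕ × ℕ) := μ.cells.filter fun q => (q.1 + 1, q.2) ∉ μ

noncomputable def unshiftBelow (i : ℕ) : YoungDiagram where
  cells := _root_.unshiftBelow i μ.cells
  isLowerSet := by
    rw [_root_.unshiftBelow, coe_preimage]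
    exact μ.isLowerSet.preimage (shiftBelow i).monotone

def insertRow (q : ℕ × ℕ) (hq : q ∈ μ.colBottoms) : YoungDiagram where
  cells := μ.cells.map (shiftBelow q.1).toEmbedding ∪ {q.1 + 1} ×ˢ range (q.2 + 1)
  isLowerSet := by
    obtain ⟨hqμ, hqb⟩ := mem_filter.1 hq
    rintro x y hyx hx
    simp only [coe_union, coe_map, coe_product, coe_singleton, coe_range, Set.mem_union,
      Set.mem_image, Set.mem_prod, Set.mem_singleton_iff, Set.mem_Iio, mem_coe, mem_cells,
      RelEmbedding.coe_toEmbedding] at hx ⊢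
    obtain ⟨hyx1, hyx2⟩ := Prod.le_def.1 hyx
    by_cases hy : y.1 = q.1 + 1
    · refine Or.inr ⟨hy, ?_⟩
      rcases hx with ⟨z, hz, rfl⟩ | ⟨-, hx2⟩
      · have hz1 : q.1 < z.1 := by
          simp only [shiftBelow_apply] at hyx1
          split_ifs at hyx1 <;> omega
        have hz2 : z.2 < q.2 + 1 := by
          by_contra! h
          exact hqb (μ.up_left_mem hz1 (by omega) hz)
        exact lt_of_le_of_lt hyx2 hz2
      · exact lt_of_le_of_lt hyx2 hx2
    · obtain ⟨z, rfl⟩ := exists_shiftBelow_eq hy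
      refine Or.inl ⟨z, ?_, rfl⟩
      rcases hx with ⟨w, hw, rfl⟩ | ⟨hx1, hx2⟩
      · exact μ.isLowerSet ((shiftBelow q.1).le_iff_le.1 hyx) hw
      · have hz1 : z.1 ≤ q.1 := by
          have := shiftBelow_fst_ne q.1 z
          simp only [shiftBelow_apply] at hyx1 this
          split_ifs at hyx1 this <;> omega
        exact μ.up_left_mem hz1 (by simp only [shiftBelow_apply] at hyx2; omega) hqμ

variable {μ}

lemma isCorner_transpose {p : ℕ × ℕ} : μ.transpose.IsCorner p ↔ μ.IsCorner p.swap := by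
  simp only [IsCorner, mem_transpose, Prod.swap_prod_mk, Prod.fst_swap, Prod.snd_swap]
  exact and_comm

lemma mem_colBottoms {q : ℕ × ℕ} : q ∈ μ.colBottoms ↔ q.1 + 1 = μ.colLen q.2 := by
  obtain ⟨i, j⟩ := q
  simp only [colBottoms, mem_filter, mem_cells, mem_iff_lt_colLen]
  omega

variable (μ) in
lemma card_colBottoms : μ.colBottoms.card = μ.rowLen 0 := by
  rw [← card_range (μ.rowLen 0)]
  refine card_bij (fun q _ => q.2) (fun q hq => ?_) (fun p hp q hq h => ?_) fun j hj => ?_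
  · rw [mem_range, ← mem_iff_lt_rowLen]
    exact μ.up_left_mem (Nat.zero_le _) le_rfl (mem_filter.1 hq).1
  · rw [mem_colBottoms, h] at hp
    rw [mem_colBottoms] at hq
    ext <;> omega
  · rw [mem_range, ← mem_iff_lt_rowLen, mem_iff_lt_colLen] at hj
    exact ⟨(μ.colLen j - 1, j), mem_colBottoms.2 (Nat.sub_add_cancel hj), rfl⟩

@[simp]
lemma mem_unshiftBelow {i : ℕ} {x : ℕ × ℕ} : x ∈ μ.unshiftBelow i ↔ shiftBelow i x ∈ μ :=
  _root_.mem_unshiftBelow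

section InsertRow

variable {q : ℕ × ℕ} (hq : q ∈ μ.colBottoms)
include hq

lemma mem_insertRow {x : ℕ × ℕ} :
    x ∈ μ.insertRow q hq ↔ (∃ y ∈ μ, shiftBelow q.1 y = x) ∨ (x.1 = q.1 + 1 ∧ x.2 ≤ q.2) := by
  simp only [insertRow, ← mem_cells, mem_union, mem_map, RelEmbedding.coe_toEmbedding,
    mem_product, mem_singleton, mem_range, Nat.lt_succ_iff]

lemma shiftBelow_mem_insertRow {y : ℕ × ℕ} : shiftBelow q.1 y ∈ μ.insertRow q hq ↔ y ∈ μ := by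
  simp [mem_insertRow, (shiftBelow q.1).injective.eq_iff, shiftBelow_fst_ne q.1 y]

lemma mk_mem_insertRow {j : ℕ} : (q.1 + 1, j) ∈ μ.insertRow q hq ↔ j ≤ q.2 := by
  simp only [mem_insertRow, true_and]
  exact or_iff_right fun ⟨y, _, hy⟩ => shiftBelow_fst_ne q.1 y (congrArg Prod.fst hy)

lemma unshiftBelow_insertRow : (μ.insertRow q hq).unshiftBelow q.1 = μ := by
  ext x
  simp only [mem_cells, mem_unshiftBelow, shiftBelow_mem_insertRow]

lemma isCorner_insertRow : (μ.insertRow q hq).IsCorner (q.1 + 1, q.2) := by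
  have hdown : (q.1 + 1 + 1, q.2) = shiftBelow q.1 (q.1 + 1, q.2) := by
    simp [shiftBelow_apply]
  refine ⟨?_, fun h => absurd ((mk_mem_insertRow hq).1 h) (by omega)⟩
  rw [hdown, shiftBelow_mem_insertRow]
  exact (mem_filter.1 hq).2

lemma isCorner_insertRow_shiftBelow {y : ℕ × ℕ} (hy : y ∈ μ) :
    (μ.insertRow q hq).IsCorner (shiftBelow q.1 y) ↔ μ.IsCorner y ∧ y ≠ q := by
  obtain ⟨hqμ, hqb⟩ := mem_filter.1 hq
  obtain ⟨r, j⟩ := y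
  have hright : ((shiftBelow q.1 (r, j)).1, (shiftBelow q.1 (r, j)).2 + 1) =
      shiftBelow q.1 (r, j + 1) := rfl
  show ((shiftBelow q.1 (r, j)).1 + 1, (shiftBelow q.1 (r, j)).2) ∉ _ ∧ _ ∉ _ ↔
    ((r + 1, j) ∉ μ ∧ (r, j + 1) ∉ μ) ∧ (r, j) ≠ q
  rw [hright, shiftBelow_mem_insertRow]
  by_cases hr : r = q.1
  · subst hr
    have hdown : ((shiftBelow q.1 (q.1, j)).1 + 1, (shiftBelow q.1 (q.1, j)).2) = (q.1 + 1, j) := by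
      simp [shiftBelow_apply]
    rw [hdown, mk_mem_insertRow]
    constructor
    · rintro ⟨hj, hr⟩
      refine ⟨⟨fun h => hqb (μ.up_left_mem le_rfl (by omega) h), hr⟩, fun h => hj ?_⟩
      rw [← h]
    · rintro ⟨⟨-, hr⟩, hne⟩
      have : q.2 < j + 1 := by
        by_contra! h
        exact hr (μ.up_left_mem le_rfl h hqμ)
      exact ⟨fun h => hne (Prod.ext rfl (by simp only; omega)), hr⟩
  · have hdown : ((shiftBelow q.1 (r, j)).1 + 1, (shiftBelow q.1 (r, j)).2) =
        shiftBelow q.1 (r + 1, j) := by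
      simp only [shiftBelow_apply]
      split_ifs <;> first | rfl | omega
    rw [hdown, shiftBelow_mem_insertRow]
    exact (and_iff_left fun h => hr (congrArg Prod.fst h)).symm

end InsertRow

section UnshiftBelow

variable {i c : ℕ} (hc : (i + 1, c) ∈ μ) (hcorner : μ.IsCorner (i + 1, c))
include hc hcorner

lemma mem_colBottoms_unshiftBelow : (i, c) ∈ (μ.unshiftBelow i).colBottoms := by
  simp only [colBottoms, mem_filter, mem_cells, mem_unshiftBelow, shiftBelow_apply, le_refl,
    if_true, add_le_iff_nonpos_right]
  exact ⟨μ.up_left_mem (Nat.le_succ i) le_rfl hc, hcorner.1⟩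

lemma insertRow_unshiftBelow :
    (μ.unshiftBelow i).insertRow (i, c) (mem_colBottoms_unshiftBelow hc hcorner) = μ := by
  ext ⟨r, j⟩
  simp only [mem_cells]
  by_cases hr : r = i + 1
  · subst hr
    refine (mk_mem_insertRow (q := (i, c)) _).trans
      ⟨fun h => μ.up_left_mem le_rfl h hc, fun h => ?_⟩
    by_contra! hj
    exact hcorner.2 (μ.up_left_mem le_rfl hj h)
  · obtain ⟨y, hy⟩ := exists_shiftBelow_eq (i := i) (x := (r, j)) hr
    rw [← hy]
    exact (shiftBelow_mem_insertRow (q := (i, c)) _).trans mem_unshiftBelow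

end UnshiftBelow

end YoungDiagram

attribute [ext] TreeLikeTableau

namespace TreeLikeTableau

/-- With `HasPointLeft`, the two alternatives of `TreeLikeTableau.point_cond`. -/
def HasPointAbove (P : Finset (ℕ × ℕ)) (p : ℕ × ℕ) : Prop := ∃ r < p.1, (r, p.2) ∈ P

def HasPointLeft (P : Finset (ℕ × ℕ)) (p : ℕ × ℕ) : Prop := ∃ c < p.2, (p.1, c) ∈ P

instance (P : Finset (ℕ × ℕ)) : DecidablePred (HasPointAbove P) :=
  fun _ => inferInstanceAs (Decidable (∃ _ < _, _))

instance (P : Finset (ℕ × ℕ)) : DecidablePred (HasPointLeft P) :=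
  fun _ => inferInstanceAs (Decidable (∃ _ < _, _))

lemma hasPointLeft_shiftBelow_iff {Q : Finset (ℕ × ℕ)} {i : ℕ} {p : ℕ × ℕ} :
    HasPointLeft Q (shiftBelow i p) ↔ HasPointLeft (unshiftBelow i Q) p :=
  exists_congr fun _ => and_congr_right fun _ => by rw [mem_unshiftBelow]; rfl

/-- Row `i + 1` is missed by `shiftBelow i`; `hQ` keeps it from holding the point above. -/
lemma hasPointAbove_shiftBelow_iff {Q : Finset (ℕ × ℕ)} {i : ℕ} {p : ℕ × ℕ}
    (hQ : ∀ j r, (i + 1, j) ∈ Q → i + 1 < r → (r, j) ∉ Q) (hp : shiftBelow i p ∈ Q) :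
    HasPointAbove Q (shiftBelow i p) ↔ HasPointAbove (unshiftBelow i Q) p := by
  obtain ⟨a, b⟩ := p
  simp only [HasPointAbove, mem_unshiftBelow, shiftBelow_apply] at hp ⊢
  constructor
  · rintro ⟨r, hr, hrQ⟩
    have hri : r ≠ i + 1 := fun h => hQ b _ (h ▸ hrQ) (by split_ifs at hr ⊢ <;> omega) hp
    refine ⟨if r ≤ i then r else r - 1, by split_ifs at hr ⊢ <;> omega, ?_⟩
    convert hrQ using 2
    split_ifs <;> omega
  · rintro ⟨r, hr, hrQ⟩
    exact ⟨_, by split_ifs <;> omega, hrQ⟩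

lemma xor_shiftBelow_iff {Q : Finset (ℕ × ℕ)} {i : ℕ} {p : ℕ × ℕ}
    (hQ : ∀ j r, (i + 1, j) ∈ Q → i + 1 < r → (r, j) ∉ Q) (hp : shiftBelow i p ∈ Q) :
    Xor (HasPointAbove Q (shiftBelow i p)) (HasPointLeft Q (shiftBelow i p)) ↔
      Xor (HasPointAbove (unshiftBelow i Q) p) (HasPointLeft (unshiftBelow i Q) p) := by
  rw [hasPointAbove_shiftBelow_iff hQ hp, hasPointLeft_shiftBelow_iff]

lemma hasPointAbove_map_prodComm {P : Finset (ℕ × ℕ)} {p : ℕ × ℕ} :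
    HasPointAbove (P.map (Equiv.prodComm ℕ ℕ).toEmbedding) p ↔ HasPointLeft P p.swap := by
  simp [HasPointAbove, HasPointLeft, mem_map_equiv]

lemma hasPointLeft_map_prodComm {P : Finset (ℕ × ℕ)} {p : ℕ × ℕ} :
    HasPointLeft (P.map (Equiv.prodComm ℕ ℕ).toEmbedding) p ↔ HasPointAbove P p.swap := by
  simp [HasPointAbove, HasPointLeft, mem_map_equiv]

section Transpose

def transpose (T : TreeLikeTableau) : TreeLikeTableau where
  shape := T.shape.transpose
  points := T.points.map (Equiv.prodComm ℕ ℕ).toEmbedding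
  points_subset p hp := by
    simpa using T.points_subset (mem_map_equiv.1 hp)
  root_mem := mem_map_equiv.2 T.root_mem
  point_cond p hp h0 := by
    show Xor (HasPointAbove _ p) (HasPointLeft _ p)
    rw [hasPointAbove_map_prodComm, hasPointLeft_map_prodComm, xor_comm]
    exact T.point_cond p.swap (mem_map_equiv.1 hp) (by simpa [Prod.ext_iff, and_comm] using h0)
  no_empty_row i j h := by
    simpa using T.no_empty_col j i (YoungDiagram.mem_transpose.1 h)
  no_empty_col i j h := by
    simpa using T.no_empty_row j i (YoungDiagram.mem_transpose.1 h)

variable (T : TreeLikeTableau)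

lemma transpose_points : T.transpose.points = T.points.map (Equiv.prodComm ℕ ℕ).toEmbedding :=
  rfl

variable {T} in
lemma mem_transpose_points {p : ℕ × ℕ} : p ∈ T.transpose.points ↔ p.swap ∈ T.points := by
  simp [transpose_points, mem_map_equiv]

@[simp]
lemma transpose_transpose : T.transpose.transpose = T := by
  ext1
  · exact T.shape.transpose_transpose
  · ext p
    simp [mem_transpose_points]

lemma size_transpose : T.transpose.size = T.size := card_map _

variable {T} in
lemma mem_occCorners {p : ℕ × ℕ} : p ∈ T.occCorners ↔ p ∈ T.points ∧ T.shape.IsCorner p :=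
  mem_filter

lemma occCorners_transpose :
    T.transpose.occCorners = T.occCorners.map (Equiv.prodComm ℕ ℕ).toEmbedding := by
  ext p
  rw [mem_occCorners, mem_map_equiv, mem_occCorners, mem_transpose_points]
  exact and_congr_right' YoungDiagram.isCorner_transpose

lemma oc_transpose : T.transpose.oc = T.oc := by
  rw [oc, oc, occCorners_transpose, card_map]

end Transpose

section Size

variable (T : TreeLikeTableau)

lemma card_filter_not_hasPointLeft :
    (T.points.filter fun p => ¬HasPointLeft T.points p).card = T.shape.colLen 0 := by
  rw [← card_range (T.shape.colLen 0)]
  refine card_bij (fun p _ => p.1) (fun p hp => ?_) (fun p hp q hq h => ?_) fun r hr => ?_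
  · rw [mem_range, ← YoungDiagram.mem_iff_lt_colLen]
    exact T.shape.up_left_mem le_rfl (Nat.zero_le _) (T.points_subset (mem_filter.1 hp).1)
  · rw [mem_filter] at hp hq
    rcases lt_trichotomy p.2 q.2 with hpq | hpq | hpq
    · exact absurd ⟨p.2, hpq, h ▸ hp.1⟩ hq.2
    · exact Prod.ext h hpq
    · exact absurd ⟨q.2, hpq, h ▸ hq.1⟩ hp.2
  · rw [mem_range, ← YoungDiagram.mem_iff_lt_colLen] at hr
    have hrow := T.no_empty_row r 0 hr
    refine ⟨(r, Nat.find hrow), mem_filter.2 ⟨Nat.find_spec hrow, ?_⟩, rfl⟩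
    rintro ⟨c, hc, hmem⟩
    exact Nat.find_min hrow hc hmem

lemma card_filter_not_hasPointAbove :
    (T.points.filter fun p => ¬HasPointAbove T.points p).card = T.shape.rowLen 0 := by
  rw [← YoungDiagram.colLen_transpose]
  refine Eq.trans ?_ T.transpose.card_filter_not_hasPointLeft
  rw [transpose_points, filter_map, card_map]
  congr 1
  exact filter_congr fun p _ => by simp [hasPointLeft_map_prodComm]

/-- Every row and every column starts with a point; the root starts both, every other point
exactly one. -/
lemma colLen_zero_add_rowLen_zero : T.shape.colLen 0 + T.shape.rowLen 0 = T.size + 1 := by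
  rw [← card_filter_not_hasPointLeft, ← card_filter_not_hasPointAbove, ← card_union_add_card_inter,
    ← filter_or, ← filter_and, size]
  have hor : T.points.filter (fun p => ¬HasPointLeft T.points p ∨ ¬HasPointAbove T.points p) =
      T.points := by
    refine filter_true_of_mem fun p hp => ?_
    by_cases h0 : p = (0, 0)
    · exact Or.inl fun ⟨c, hc, _⟩ => by simp [h0] at hc
    · exact (not_and_or.1 ((xor_iff_or_and_not_and _ _).1 (T.point_cond p hp h0)).2).symm
  have hand : T.points.filter (fun p => ¬HasPointLeft T.points p ∧ ¬HasPointAbove T.points p) =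
      {(0, 0)} := by
    ext p
    rw [mem_filter, mem_singleton]
    constructor
    · rintro ⟨hp, hL, hA⟩
      by_contra h0
      exact ((xor_iff_or_and_not_and _ _).1 (T.point_cond p hp h0)).1.elim hA hL
    · rintro rfl
      exact ⟨T.root_mem, fun ⟨c, hc, _⟩ => by simp at hc, fun ⟨r, hr, _⟩ => by simp at hr⟩
  rw [hor, hand, card_singleton]

lemma lt_size_add_one_of_mem_shape {x : ℕ × ℕ} (hx : x ∈ T.shape) :
    x.1 < T.size + 1 ∧ x.2 < T.size + 1 := by
  have hrow := YoungDiagram.mem_iff_lt_colLen.1 (T.shape.up_left_mem le_rfl (Nat.zero_le x.2) hx)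
  have hcol := YoungDiagram.mem_iff_lt_rowLen.1 (T.shape.up_left_mem (Nat.zero_le x.1) le_rfl hx)
  have := T.colLen_zero_add_rowLen_zero
  omega

variable {T} in
lemma ne_zero_of_mem_occCorners (hT : 2 ≤ T.size) {p : ℕ × ℕ} (hp : p ∈ T.occCorners) :
    p ≠ (0, 0) := by
  rintro rfl
  obtain ⟨hdown, hright⟩ := (mem_occCorners.1 hp).2
  rw [YoungDiagram.mem_iff_lt_colLen] at hdown
  rw [YoungDiagram.mem_iff_lt_rowLen] at hright
  dsimp only at hdown hright
  have := T.colLen_zero_add_rowLen_zero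
  omega

lemma finite_setOf_size (n : ℕ) : {T : TreeLikeTableau | T.size = n}.Finite := by
  set B := range (n + 1) ×ˢ range (n + 1)
  refine Set.Finite.of_finite_image (f := fun T => (T.shape.cells, T.points)) ?_ ?_
  · refine (B.powerset ×ˢ B.powerset).finite_toSet.subset ?_
    rintro _ ⟨T, rfl, rfl⟩
    have hB : T.shape.cells ⊆ B := fun x hx => by
      simpa [B] using T.lt_size_add_one_of_mem_shape hx
    simp [hB, T.points_subset.trans hB]
  · intro S _ T _ h
    simp only [Prod.ext_iff] at h
    exact TreeLikeTableau.ext (YoungDiagram.ext h.1) h.2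

noncomputable def ofSize (n : ℕ) : Finset TreeLikeTableau := (finite_setOf_size n).toFinset

variable {T} in
lemma mem_ofSize {n : ℕ} : T ∈ ofSize n ↔ T.size = n := Set.Finite.mem_toFinset _

lemma card_filter_ofSize (n k : ℕ) : ((ofSize n).filter fun T => T.oc = k).card = a n k := by
  rw [a, ← Set.ncard_coe_finset]
  congr
  ext T
  simp [mem_ofSize]

end Size

section Sites

variable (T : TreeLikeTableau)

/-- `inl q` stands for the lowest cell `q` of a column, `inr q` for the lowest cell `q` of a
column of the transpose, i.e. the last cell `q.swap` of a row. -/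
def sites : Finset ((ℕ × ℕ) ⊕ (ℕ × ℕ)) :=
  T.shape.colBottoms.disjSum T.transpose.shape.colBottoms

def occSites : Finset ((ℕ × ℕ) ⊕ (ℕ × ℕ)) := T.occCorners.disjSum T.transpose.occCorners

lemma card_sites : T.sites.card = T.size + 1 := by
  rw [sites, card_disjSum, YoungDiagram.card_colBottoms, YoungDiagram.card_colBottoms,
    ← T.colLen_zero_add_rowLen_zero, add_comm]
  exact congrArg (· + _) (T.shape.rowLen_transpose 0)

lemma occCorners_subset_colBottoms : T.occCorners ⊆ T.shape.colBottoms := fun _ hp =>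
  mem_filter.2 ⟨T.points_subset (mem_occCorners.1 hp).1, (mem_occCorners.1 hp).2.1⟩

lemma occSites_subset_sites : T.occSites ⊆ T.sites :=
  disjSum_mono T.occCorners_subset_colBottoms T.transpose.occCorners_subset_colBottoms

lemma card_occSites : T.occSites.card = 2 * T.oc := by
  rw [occSites, card_disjSum, ← oc, ← oc, oc_transpose, two_mul]

end Sites

section InsertBelowPoints

variable {T : TreeLikeTableau} {q : ℕ × ℕ} (hq : q ∈ T.shape.colBottoms)
include hq

lemma no_point_below_insertBelowPoints (j r : ℕ) (hj : (q.1 + 1, j) ∈ insertBelowPoints T.points q)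
    (hr : q.1 + 1 < r) : (r, j) ∉ insertBelowPoints T.points q := by
  rw [mk_mem_insertBelowPoints.1 hj, mem_insertBelowPoints]
  rintro (h | ⟨y, hy, he⟩)
  · simp only [Prod.mk.injEq] at h
    omega
  · have hy1 : q.1 + 1 ≤ y.1 := by
      have := congrArg Prod.fst he
      simp only [shiftBelow_apply] at this
      split_ifs at this <;> omega
    have hy2 : y.2 = q.2 := by simpa [shiftBelow_apply] using congrArg Prod.snd he
    exact (mem_filter.1 hq).2 (T.shape.up_left_mem hy1 hy2.ge (T.points_subset hy))

lemma hasPointAbove_insertBelowPoints :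
    HasPointAbove (insertBelowPoints T.points q) (q.1 + 1, q.2) := by
  obtain ⟨r, hr⟩ := T.no_empty_col q.1 q.2 (mem_filter.1 hq).1
  have hri : r ≤ q.1 := by
    by_contra! h
    exact (mem_filter.1 hq).2 (T.shape.up_left_mem h le_rfl (T.points_subset hr))
  refine ⟨r, Nat.lt_succ_of_le hri, mem_insertBelowPoints.2 (Or.inr ⟨_, hr, ?_⟩)⟩
  simp [shiftBelow_apply, hri]

lemma xor_insertBelowPoints {p : ℕ × ℕ} (hp : p ∈ insertBelowPoints T.points q)
    (h0 : p ≠ (0, 0)) :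
    Xor (HasPointAbove (insertBelowPoints T.points q) p)
      (HasPointLeft (insertBelowPoints T.points q) p) := by
  rcases mem_insertBelowPoints.1 hp with rfl | ⟨y, hy, rfl⟩
  · exact Or.inl ⟨hasPointAbove_insertBelowPoints hq,
      fun ⟨c, hc, hmem⟩ => hc.ne ((mk_mem_insertBelowPoints (q := q)).1 hmem)⟩
  · rw [xor_shiftBelow_iff (no_point_below_insertBelowPoints hq) hp,
      unshiftBelow_insertBelowPoints]
    exact T.point_cond y hy fun h => h0 (by rw [h, shiftBelow_zero])

end InsertBelowPoints

noncomputable def insertBelow (T : TreeLikeTableau) (q : ℕ × ℕ) : TreeLikeTableau :=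
  if hq : q ∈ T.shape.colBottoms then
    { shape := T.shape.insertRow q hq
      points := insertBelowPoints T.points q
      points_subset := fun x hx => by
        rcases mem_insertBelowPoints.1 hx with rfl | ⟨y, hy, rfl⟩
        · exact (YoungDiagram.mk_mem_insertRow hq).2 le_rfl
        · exact (YoungDiagram.shiftBelow_mem_insertRow hq).2 (T.points_subset hy)
      root_mem := mem_insertBelowPoints.2 (Or.inr ⟨_, T.root_mem, shiftBelow_zero q.1⟩)
      point_cond := fun p => xor_insertBelowPoints hq
      no_empty_row := fun i j h => by
        rcases (YoungDiagram.mem_insertRow hq).1 h with ⟨y, hy, he⟩ | ⟨rfl, -⟩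
        · obtain ⟨c, hc⟩ := T.no_empty_row y.1 y.2 hy
          refine ⟨c, mem_insertBelowPoints.2 (Or.inr ⟨_, hc, ?_⟩)⟩
          have := congrArg Prod.fst he
          simp only [shiftBelow_apply] at this ⊢
          rw [this]
        · exact ⟨q.2, mk_mem_insertBelowPoints.2 rfl⟩
      no_empty_col := fun i j h => by
        have hcol : ∃ r, (r, j) ∈ T.shape := by
          rcases (YoungDiagram.mem_insertRow hq).1 h with ⟨y, hy, he⟩ | ⟨-, hj⟩
          · have hj : y.2 = j := by simpa [shiftBelow_apply] using congrArg Prod.snd he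
            exact ⟨y.1, hj ▸ hy⟩
          · exact ⟨q.1, T.shape.up_left_mem le_rfl hj (mem_filter.1 hq).1⟩
        obtain ⟨r, hr⟩ := hcol
        obtain ⟨r', hr'⟩ := T.no_empty_col r j hr
        exact ⟨_, mem_insertBelowPoints.2 (Or.inr ⟨_, hr', rfl⟩)⟩ }
  else T

section InsertBelow

variable {T : TreeLikeTableau} {q : ℕ × ℕ} (hq : q ∈ T.shape.colBottoms)
include hq

lemma shape_insertBelow : (T.insertBelow q).shape = T.shape.insertRow q hq := by
  rw [insertBelow, dif_pos hq]

lemma points_insertBelow : (T.insertBelow q).points = insertBelowPoints T.points q := by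
  rw [insertBelow, dif_pos hq]

lemma size_insertBelow : (T.insertBelow q).size = T.size + 1 := by
  rw [size, points_insertBelow hq, insertBelowPoints,
    card_insert_of_notMem (new_notMem_map_shiftBelow _ _), card_map, size]

lemma hasPointAbove_insertBelow : HasPointAbove (T.insertBelow q).points (q.1 + 1, q.2) := by
  rw [points_insertBelow hq]
  exact hasPointAbove_insertBelowPoints hq

lemma occCorners_insertBelow :
    (T.insertBelow q).occCorners =
      insert (q.1 + 1, q.2) ((T.occCorners.erase q).map (shiftBelow q.1).toEmbedding) := by
  ext x
  rw [mem_occCorners, points_insertBelow hq, shape_insertBelow hq, mem_insertBelowPoints,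
    mem_insert, mem_map]
  constructor
  · rintro ⟨rfl | ⟨y, hy, rfl⟩, hx⟩
    · exact Or.inl rfl
    · rw [YoungDiagram.isCorner_insertRow_shiftBelow hq (T.points_subset hy)] at hx
      exact Or.inr ⟨y, mem_erase.2 ⟨hx.2, mem_occCorners.2 ⟨hy, hx.1⟩⟩, rfl⟩
  · rintro (rfl | ⟨y, hy, rfl⟩)
    · exact ⟨Or.inl rfl, YoungDiagram.isCorner_insertRow hq⟩
    · obtain ⟨hne, hy⟩ := mem_erase.1 hy
      obtain ⟨hyP, hyc⟩ := mem_occCorners.1 hy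
      refine ⟨Or.inr ⟨y, hyP, rfl⟩, ?_⟩
      exact (YoungDiagram.isCorner_insertRow_shiftBelow hq (T.points_subset hyP)).2 ⟨hyc, hne⟩

lemma new_mem_occCorners_insertBelow : (q.1 + 1, q.2) ∈ (T.insertBelow q).occCorners := by
  rw [occCorners_insertBelow hq]
  exact mem_insert_self _ _

/-- The new point becomes an occupied corner, and `q` stops being one. -/
lemma oc_insertBelow : (T.insertBelow q).oc = if q ∈ T.occCorners then T.oc else T.oc + 1 := by
  rw [oc, occCorners_insertBelow hq, card_insert_of_notMem (new_notMem_map_shiftBelow _ _),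
    card_map]
  split_ifs with h
  · rw [card_erase_of_mem h, oc, Nat.sub_add_cancel (card_pos.2 ⟨q, h⟩)]
  · rw [erase_eq_of_notMem h, oc]

end InsertBelow

lemma eq_of_insertBelow_eq {S T : TreeLikeTableau} {q : ℕ × ℕ} (hS : q ∈ S.shape.colBottoms)
    (hT : q ∈ T.shape.colBottoms) (h : S.insertBelow q = T.insertBelow q) : S = T := by
  ext1
  · rw [← YoungDiagram.unshiftBelow_insertRow hS, ← YoungDiagram.unshiftBelow_insertRow hT,
      ← shape_insertBelow hS, ← shape_insertBelow hT, h]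
  · rw [← unshiftBelow_insertBelowPoints S.points q, ← unshiftBelow_insertBelowPoints T.points q,
      ← points_insertBelow hS, ← points_insertBelow hT, h]


section DeleteRow

variable {T : TreeLikeTableau}

/-- No point to the left of `p` by the xor condition, no cell to its right since `p` is a
corner. -/
lemma eq_snd_of_mk_mem_points {p : ℕ × ℕ} (hp : p ∈ T.occCorners)
    (habove : HasPointAbove T.points p) {j : ℕ} (hj : (p.1, j) ∈ T.points) : j = p.2 := by
  obtain ⟨hpP, -, hright⟩ := mem_occCorners.1 hp
  have h0 : p ≠ (0, 0) := fun h => by obtain ⟨r, hr, -⟩ := habove; simp [h] at hr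
  have hleft : ¬HasPointLeft T.points p :=
    ((xor_iff_or_and_not_and _ _).1 (T.point_cond p hpP h0)).2 ∘ And.intro habove
  rcases lt_trichotomy j p.2 with h | h | h
  · exact absurd ⟨j, h, hj⟩ hleft
  · exact h
  · exact absurd (T.shape.up_left_mem le_rfl h (T.points_subset hj)) hright

lemma no_point_below_of_mem_occCorners {p : ℕ × ℕ} (hp : p ∈ T.occCorners)
    (habove : HasPointAbove T.points p) (j r : ℕ) (hj : (p.1, j) ∈ T.points) (hr : p.1 < r) :
    (r, j) ∉ T.points := fun h => by
  rw [eq_snd_of_mk_mem_points hp habove hj] at h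
  exact (mem_occCorners.1 hp).2.1 (T.shape.up_left_mem hr le_rfl (T.points_subset h))

variable {i b : ℕ} (hp : (i + 1, b) ∈ T.occCorners) (habove : HasPointAbove T.points (i + 1, b))

noncomputable def deleteRow : TreeLikeTableau where
  shape := T.shape.unshiftBelow i
  points := unshiftBelow i T.points
  points_subset x hx := YoungDiagram.mem_unshiftBelow.2 (T.points_subset (mem_unshiftBelow.1 hx))
  root_mem := mem_unshiftBelow.2 (by rw [shiftBelow_zero]; exact T.root_mem)
  point_cond x hx h0 :=
    (xor_shiftBelow_iff (no_point_below_of_mem_occCorners hp habove) (mem_unshiftBelow.1 hx)).1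
      (T.point_cond _ (mem_unshiftBelow.1 hx) (shiftBelow_ne_zero i h0))
  no_empty_row r j h := by
    obtain ⟨c, hc⟩ := T.no_empty_row _ _ (YoungDiagram.mem_unshiftBelow.1 h)
    exact ⟨c, mem_unshiftBelow.2 hc⟩
  no_empty_col r j h := by
    obtain ⟨r', hr'⟩ := T.no_empty_col _ _ (YoungDiagram.mem_unshiftBelow.1 h)
    have hcol : ∃ r', r' ≠ i + 1 ∧ (r', j) ∈ T.points := by
      by_cases hri : r' = i + 1
      · subst hri
        have hj : j = b := eq_snd_of_mk_mem_points hp habove hr'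
        obtain ⟨r'', hr'', hmem⟩ := habove
        exact ⟨r'', hr''.ne, hj ▸ hmem⟩
      · exact ⟨r', hri, hr'⟩
    obtain ⟨r', hri, hr'⟩ := hcol
    obtain ⟨y, hy⟩ := exists_shiftBelow_eq (x := (r', j)) hri
    have hyj : (y.1, j) = y :=
      Prod.ext rfl (by simpa [shiftBelow_apply] using (congrArg Prod.snd hy).symm)
    exact ⟨y.1, mem_unshiftBelow.2 (by rw [hyj, hy]; exact hr')⟩

lemma mem_colBottoms_deleteRow : (i, b) ∈ (deleteRow hp habove).shape.colBottoms :=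
  YoungDiagram.mem_colBottoms_unshiftBelow (T.points_subset (mem_occCorners.1 hp).1)
    (mem_occCorners.1 hp).2

lemma insertBelow_deleteRow : (deleteRow hp habove).insertBelow (i, b) = T := by
  obtain ⟨hpP, hcorner⟩ := mem_occCorners.1 hp
  ext1
  · rw [shape_insertBelow (mem_colBottoms_deleteRow hp habove)]
    exact YoungDiagram.insertRow_unshiftBelow (T.points_subset hpP) hcorner
  · rw [points_insertBelow (mem_colBottoms_deleteRow hp habove)]
    ext x
    rw [mem_insertBelowPoints]
    constructor
    · rintro (rfl | ⟨y, hy, rfl⟩)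
      · exact hpP
      · exact mem_unshiftBelow.1 hy
    · intro hx
      by_cases hxi : x.1 = i + 1
      · obtain ⟨r, j⟩ := x
        obtain rfl : r = i + 1 := hxi
        exact Or.inl (by rw [eq_snd_of_mk_mem_points hp habove hx])
      · obtain ⟨y, rfl⟩ := exists_shiftBelow_eq hxi
        exact Or.inr ⟨y, mem_unshiftBelow.2 hx, rfl⟩

end DeleteRow

noncomputable def insertAt (T : TreeLikeTableau) : (ℕ × ℕ) ⊕ (ℕ × ℕ) → TreeLikeTableau :=
  Sum.elim T.insertBelow fun q => (T.transpose.insertBelow q).transpose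

def newCorner : (ℕ × ℕ) ⊕ (ℕ × ℕ) → ℕ × ℕ :=
  Sum.elim (fun q => (q.1 + 1, q.2)) fun q => (q.2, q.1 + 1)

section InsertAt

variable {T : TreeLikeTableau} {s : (ℕ × ℕ) ⊕ (ℕ × ℕ)} (hs : s ∈ T.sites)
include hs

lemma size_insertAt : (T.insertAt s).size = T.size + 1 := by
  rcases s with q | q
  · exact size_insertBelow (inl_mem_disjSum.1 hs)
  · rw [insertAt, Sum.elim_inr, size_transpose, size_insertBelow (inr_mem_disjSum.1 hs),
      size_transpose]

lemma oc_insertAt : (T.insertAt s).oc = if s ∈ T.occSites then T.oc else T.oc + 1 := by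
  rcases s with q | q
  · simp only [occSites, inl_mem_disjSum]
    exact oc_insertBelow (inl_mem_disjSum.1 hs)
  · rw [insertAt, Sum.elim_inr, oc_transpose, oc_insertBelow (inr_mem_disjSum.1 hs), oc_transpose]
    simp only [occSites, inr_mem_disjSum]

lemma newCorner_mem_occCorners_insertAt : newCorner s ∈ (T.insertAt s).occCorners := by
  rcases s with q | q
  · exact new_mem_occCorners_insertBelow (inl_mem_disjSum.1 hs)
  · rw [insertAt, Sum.elim_inr, occCorners_transpose, mem_map_equiv]
    exact new_mem_occCorners_insertBelow (inr_mem_disjSum.1 hs)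

/-- A corner created by `inr` has a point to its left, hence none above it. -/
lemma hasPointAbove_newCorner_iff :
    HasPointAbove (T.insertAt s).points (newCorner s) ↔ s.isLeft := by
  rcases s with q | q
  · simp only [Sum.isLeft_inl, iff_true]
    exact hasPointAbove_insertBelow (inl_mem_disjSum.1 hs)
  · simp only [Sum.isLeft_inr, Bool.false_eq_true, iff_false]
    have hleft : HasPointLeft (T.insertAt (.inr q)).points (newCorner (.inr q)) :=
      hasPointLeft_map_prodComm.2 (hasPointAbove_insertBelow (inr_mem_disjSum.1 hs))
    have hmem := (mem_occCorners.1 (newCorner_mem_occCorners_insertAt hs)).1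
    have h0 : newCorner (.inr q) ≠ (0, 0) := by simp [newCorner]
    exact fun habove =>
      ((xor_iff_or_and_not_and _ _).1 ((T.insertAt _).point_cond _ hmem h0)).2 ⟨habove, hleft⟩

end InsertAt

lemma eq_of_insertAt_eq {S T : TreeLikeTableau} {s t : (ℕ × ℕ) ⊕ (ℕ × ℕ)} (hs : s ∈ S.sites)
    (ht : t ∈ T.sites) (h : S.insertAt s = T.insertAt t) (hc : newCorner s = newCorner t) :
    S = T ∧ s = t := by
  have hlr : s.isLeft = t.isLeft := by
    rw [Bool.eq_iff_iff, ← hasPointAbove_newCorner_iff hs, ← hasPointAbove_newCorner_iff ht, h, hc]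
  rcases s with q | q <;> rcases t with q' | q'
  · obtain rfl : q = q' := by
      simp only [newCorner, Sum.elim_inl, Prod.mk.injEq, add_left_inj] at hc
      exact Prod.ext hc.1 hc.2
    exact ⟨eq_of_insertBelow_eq (inl_mem_disjSum.1 hs) (inl_mem_disjSum.1 ht) h, rfl⟩
  · simp at hlr
  · simp at hlr
  · obtain rfl : q = q' := by
      simp only [newCorner, Sum.elim_inr, Prod.mk.injEq, add_left_inj] at hc
      exact Prod.ext hc.2 hc.1
    have htr := congrArg transpose h
    simp only [insertAt, Sum.elim_inr, transpose_transpose] at htr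
    have := eq_of_insertBelow_eq (inr_mem_disjSum.1 hs) (inr_mem_disjSum.1 ht) htr
    exact ⟨by rw [← S.transpose_transpose, this, T.transpose_transpose], rfl⟩

lemma exists_insertBelow_eq {T : TreeLikeTableau} {p : ℕ × ℕ} (hp : p ∈ T.occCorners)
    (habove : HasPointAbove T.points p) :
    ∃ (T' : TreeLikeTableau) (q : ℕ × ℕ),
      q ∈ T'.shape.colBottoms ∧ T'.insertBelow q = T ∧ (q.1 + 1, q.2) = p := by
  obtain ⟨a, b⟩ := p
  obtain ⟨i, rfl⟩ : ∃ i, a = i + 1 := by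
    obtain ⟨r, hr, -⟩ := habove
    exact ⟨a - 1, by simp only at hr; omega⟩
  exact ⟨_, _, mem_colBottoms_deleteRow hp habove, insertBelow_deleteRow hp habove, rfl⟩

lemma exists_insertAt_eq {T : TreeLikeTableau} (hT : 2 ≤ T.size) {p : ℕ × ℕ}
    (hp : p ∈ T.occCorners) :
    ∃ (T' : TreeLikeTableau) (s : (ℕ × ℕ) ⊕ (ℕ × ℕ)),
      s ∈ T'.sites ∧ T'.insertAt s = T ∧ newCorner s = p := by
  rcases T.point_cond p (mem_occCorners.1 hp).1 (ne_zero_of_mem_occCorners hT hp) with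
    ⟨habove, -⟩ | ⟨hleft, -⟩
  · obtain ⟨T', q, hq, rfl, rfl⟩ := exists_insertBelow_eq hp habove
    exact ⟨T', .inl q, inl_mem_disjSum.2 hq, rfl, rfl⟩
  · have hp' : p.swap ∈ T.transpose.occCorners := by
      rw [occCorners_transpose, mem_map_equiv]
      simpa using hp
    have habove' : HasPointAbove T.transpose.points p.swap :=
      hasPointAbove_map_prodComm.2 (by rw [Prod.swap_swap]; exact hleft)
    obtain ⟨T', q, hq, hT', hqp⟩ := exists_insertBelow_eq hp' habove'
    have hq' : q ∈ T'.transpose.transpose.shape.colBottoms := by rwa [transpose_transpose]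
    refine ⟨T'.transpose, .inr q, inr_mem_disjSum.2 hq', ?_, ?_⟩
    · rw [insertAt, Sum.elim_inr, transpose_transpose, hT', transpose_transpose]
    · rw [newCorner, Sum.elim_inr, ← Prod.swap_swap p, ← hqp]
      rfl

lemma card_sigma_occCorners_eq_card_sigma_sites {m : ℕ} (hm : 1 ≤ m) (k : ℕ) :
    (((ofSize (m + 1)).filter fun T => T.oc = k).sigma occCorners).card =
      ((ofSize m).sigma fun T => T.sites.filter fun s => (T.insertAt s).oc = k).card := by
  symm
  refine card_bij (fun x _ => ⟨x.1.insertAt x.2, newCorner x.2⟩) ?_ ?_ ?_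
  · rintro ⟨T, s⟩ hx
    simp only [mem_sigma, mem_filter, mem_ofSize] at hx ⊢
    exact ⟨⟨by rw [size_insertAt hx.2.1, hx.1], hx.2.2⟩, newCorner_mem_occCorners_insertAt hx.2.1⟩
  · rintro ⟨S, s⟩ hs ⟨T, t⟩ ht h
    simp only [mem_sigma, mem_filter] at hs ht
    simp only [Sigma.mk.injEq, heq_eq_eq] at h
    obtain ⟨rfl, rfl⟩ := eq_of_insertAt_eq hs.2.1 ht.2.1 h.1 h.2
    rfl
  · rintro ⟨T, p⟩ hx
    simp only [mem_sigma, mem_filter, mem_ofSize] at hx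
    obtain ⟨T', s, hs, rfl, rfl⟩ := exists_insertAt_eq (by omega) hx.2
    rw [size_insertAt hs] at hx
    refine ⟨⟨T', s⟩, ?_, rfl⟩
    simp only [mem_sigma, mem_filter, mem_ofSize]
    exact ⟨by omega, hs, hx.1.2⟩

lemma card_filter_oc_insertAt (T : TreeLikeTableau) (k : ℕ) :
    ((T.sites.filter fun s => (T.insertAt s).oc = k).card : ℤ) =
      (if T.oc = k then 2 * (k : ℤ) else 0) +
        (if T.oc + 1 = k then (T.size : ℤ) + 1 - 2 * T.oc else 0) := by
  have hocc : ∀ s ∈ T.occSites, (T.insertAt s).oc = k ↔ T.oc = k := fun s hs => by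
    rw [oc_insertAt (T.occSites_subset_sites hs), if_pos hs]
  have hrest : ∀ s ∈ T.sites \ T.occSites, (T.insertAt s).oc = k ↔ T.oc + 1 = k := fun s hs => by
    rw [mem_sdiff] at hs
    rw [oc_insertAt hs.1, if_neg hs.2]
  have hcard : ((T.sites \ T.occSites).card : ℤ) = T.size + 1 - 2 * T.oc := by
    have := card_sdiff_add_card_eq_card T.occSites_subset_sites
    rw [card_sites, card_occSites] at this
    omega
  rw [← union_sdiff_of_subset T.occSites_subset_sites, filter_union,
    card_union_of_disjoint (disjoint_filter_filter disjoint_sdiff), filter_congr hocc,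
    filter_congr hrest, filter_const, filter_const]
  split_ifs with h1 h2 h2 <;> push_cast [card_occSites, hcard, card_empty, h1] <;> omega

lemma card_sigma_occCorners (n k : ℕ) :
    (((ofSize n).filter fun T => T.oc = k).sigma occCorners).card = a n k * k := by
  rw [card_sigma, sum_congr rfl fun T (hT : T ∈ (ofSize n).filter fun T => T.oc = k) =>
    (show #T.occCorners = k from (mem_filter.1 hT).2), sum_const, smul_eq_mul,
    card_filter_ofSize]

lemma card_sigma_filter_sites (m : ℕ) {k : ℕ} (hk : 1 ≤ k) :
    (((ofSize m).sigma fun T => T.sites.filter fun s => (T.insertAt s).oc = k).card : ℤ) =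
      2 * k * a m k + ((m : ℤ) + 1 - 2 * ((k : ℤ) - 1)) * a m (k - 1) := by
  have hsummand : ∀ T ∈ ofSize m,
      ((T.sites.filter fun s => (T.insertAt s).oc = k).card : ℤ) =
        (if T.oc = k then 2 * (k : ℤ) else 0) +
          (if T.oc = k - 1 then (m : ℤ) + 1 - 2 * ((k : ℤ) - 1) else 0) := fun T hT => by
    rw [card_filter_oc_insertAt, mem_ofSize.1 hT]
    congr 1
    by_cases h : T.oc = k - 1
    · rw [if_pos (by omega), if_pos h, h, Nat.cast_sub hk, Nat.cast_one]
    · rw [if_neg (by omega), if_neg h]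
  rw [card_sigma, Nat.cast_sum, sum_congr rfl hsummand, sum_add_distrib, ← sum_filter,
    ← sum_filter, sum_const, sum_const, card_filter_ofSize, card_filter_ofSize, nsmul_eq_mul,
    nsmul_eq_mul]
  ring

end TreeLikeTableau

open TreeLikeTableau

/-- The recurrence `k·a_{n,k} = 2k·a_{n-1,k} + (n - 2(k-1))·a_{n-1,k-1}`
for `n ≥ 2` and `k ≥ 1`. -/
theorem occupied_corners_recurrence (n k : ℕ) (hn : 2 ≤ n) (hk : 1 ≤ k) :
    (k : ℤ) * a n k =
      2 * k * a (n - 1) k + ((n : ℤ) - 2 * ((k : ℤ) - 1)) * a (n - 1) (k - 1) := by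
  obtain ⟨m, rfl⟩ : ∃ m, n = m + 1 := ⟨n - 1, by omega⟩
  have hcount := congrArg (Nat.cast : ℕ → ℤ)
    (card_sigma_occCorners_eq_card_sigma_sites (by omega : 1 ≤ m) k)
  rw [card_sigma_occCorners, card_sigma_filter_sites m hk] at hcount
  rw [Nat.add_sub_cancel]
  push_cast at hcount ⊢
  linarith
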